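/- Let Ω be a finite set and let μ be a determinantal probability measure on the subsets of Ω whose kernel K is symmetric with all eigenvalues in [0,1]. Then for every subset A ⊆ Ω, all eigenvalues λ_1,…,λ_m (m=|A|, with multiplicity) of the principal submatrix K_A lie in [0,1], for every real z one has E_μ[z^{|𝒯∩A|}] = ∏_{i=1}^m (z·λ_i + (1−λ_i)), and consequently the number of points |𝒯∩A| has the distribution of a sum of m independent Bernoulli random variables with parameters λ_1,…,λ_m: for every integer n, μ{|𝒯∩A| = n} = ∑_{S⊆{1,…,m}, |S|=n} ∏_{i∈S} λ_i ∏_{i∉S} (1−λ_i). -/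

import Mathlib

/-!
The generating function is computed by writing `z ^ |T ∩ A| = ∑_{S ⊆ T ∩ A} (z - 1) ^ |S|`:
summing against `μ`, the determinantal property turns it into `∑_{S ⊆ A} (z - 1) ^ |S| det K_S`,
the principal-minor expansion of `det (1 + (z - 1) K_A) = ∏ (1 + (z - 1) λ_i)`. The eigenvalues
of `K_A` lie in `[0, 1]` because `0 ≤ K ≤ 1` in the Loewner order and both inequalities pass to
principal submatrices. Two polynomials in `z` that agree on `ℝ` have the same coefficients, which
gives the distribution of `|𝒯 ∩ A|`.
-/

open Finset

variable {α : Type*} [Fintype α] [DecidableEq α]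

noncomputable def detSub (K : Matrix α α ℝ) (S : Finset α) : ℝ :=
  Matrix.det (K.submatrix (fun i : {x : α // x ∈ S} => (i : α))
    (fun j : {x : α // x ∈ S} => (j : α)))

def IsProbMeasure (μ : Finset α → ℝ) : Prop :=
  (∀ T, 0 ≤ μ T) ∧ (∑ T : Finset α, μ T) = 1

/-- `μ` is determinantal with kernel `K`:
`μ {T : S ⊆ T} = det K_S` for every `S ⊆ Ω`. -/
def IsDeterminantal (μ : Finset α → ℝ) (K : Matrix α α ℝ) : Prop :=
  ∀ S : Finset α, (∑ T : Finset α, if S ⊆ T then μ T else 0) = detSub K S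

namespace Matrix

variable {n : Type*} [Fintype n] [DecidableEq n]

theorem det_one_add_eq_sum_det_submatrix {R : Type*} [CommRing R] (N : Matrix n n R) :
    det (1 + N) = ∑ s : Finset n, (N.submatrix (↑) (↑) : Matrix s s R).det := by
  rw [add_comm]
  change detRowAlternating (N.row + (1 : Matrix n n R).row) = _
  rw [AlternatingMap.map_add_univ]
  exact Finset.sum_congr rfl fun s _ => det_piecewise_one_eq_submatrix_det N s

theorem IsHermitian.det_one_add_smul {𝕜 : Type*} [RCLike 𝕜] {M : Matrix n n 𝕜}
    (hM : M.IsHermitian) (c : 𝕜) :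
    det (1 + c • M) = ∏ i, (1 + c * hM.eigenvalues i) := by
  -- `1 + c • M` is the unitary conjugate of `1 + c • diagonal λ`, which has the same determinant
  conv_lhs =>
    rw [hM.spectral_theorem, ← map_smul,
      ← map_one (Unitary.conjStarAlgAut 𝕜 _ hM.eigenvectorUnitary), ← map_add,
      Unitary.conjStarAlgAut_apply, det_mul_comm, ← mul_assoc, Unitary.coe_star_mul_self, one_mul]
  rw [← diagonal_one, ← diagonal_smul, diagonal_add, det_diagonal]
  rfl

theorem IsHermitian.eigenvalues_mem {M : Matrix n n ℝ} (hM : M.IsHermitian) {s : Set ℝ}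
    (hs : ∀ (t : ℝ) (x : n → ℝ), x ≠ 0 → M *ᵥ x = t • x → t ∈ s) (i : n) :
    hM.eigenvalues i ∈ s :=
  hs _ _ (fun h => hM.eigenvectorBasis.orthonormal.ne_zero i (by simpa using h))
    (hM.mulVec_eigenvectorBasis i)

theorem IsHermitian.posSemidef_and_posSemidef_one_sub {M : Matrix n n ℝ} (hM : M.IsHermitian)
    (hs : ∀ (t : ℝ) (x : n → ℝ), x ≠ 0 → M *ᵥ x = t • x → t ∈ Set.Icc 0 1) :
    M.PosSemidef ∧ (1 - M).PosSemidef := by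
  have hM' : (1 - M).IsHermitian := isHermitian_one.sub hM
  refine ⟨hM.posSemidef_iff_eigenvalues_nonneg.mpr fun i => (hM.eigenvalues_mem hs i).1,
    hM'.posSemidef_iff_eigenvalues_nonneg.mpr fun i => hM'.eigenvalues_mem (s := Set.Ici 0) ?_ i⟩
  intro t x hx hx'
  have : M *ᵥ x = (1 - t) • x := by
    rw [sub_mulVec, one_mulVec] at hx'
    rw [sub_smul, one_smul, ← hx', sub_sub_cancel]
  simpa using (hs _ x hx this).2

theorem eigen_mem_Icc_of_posSemidef {M : Matrix n n ℝ} (h₀ : M.PosSemidef)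
    (h₁ : (1 - M).PosSemidef) {t : ℝ} {x : n → ℝ} (hx : x ≠ 0) (hMx : M *ᵥ x = t • x) :
    t ∈ Set.Icc 0 1 := by
  have hxx : 0 < x ⬝ᵥ x := by
    simpa using dotProduct_star_self_pos_iff.mpr hx
  have q₀ := h₀.dotProduct_mulVec_nonneg x
  have q₁ := h₁.dotProduct_mulVec_nonneg x
  simp only [sub_mulVec, one_mulVec, dotProduct_sub, hMx, dotProduct_smul, star_trivial,
    smul_eq_mul] at q₀ q₁
  constructor <;> nlinarith

theorem IsHermitian.eigen_mem_Icc_submatrix {m : Type*} [Fintype m] [DecidableEq m]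
    {M : Matrix n n ℝ} (hM : M.IsHermitian)
    (hs : ∀ (t : ℝ) (x : n → ℝ), x ≠ 0 → M *ᵥ x = t • x → t ∈ Set.Icc 0 1)
    {f : m → n} (hf : Function.Injective f) (t : ℝ) (y : m → ℝ) (hy : y ≠ 0)
    (hMy : M.submatrix f f *ᵥ y = t • y) : t ∈ Set.Icc 0 1 := by
  obtain ⟨h₀, h₁⟩ := hM.posSemidef_and_posSemidef_one_sub hs
  refine eigen_mem_Icc_of_posSemidef (h₀.submatrix f) ?_ hy hMy
  rw [← submatrix_one f hf]
  exact h₁.submatrix f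

end Matrix

theorem Polynomial.sum_ite_eq_of_forall_sum_mul_pow_eq {R ι κ : Type*} [CommRing R] [IsDomain R]
    [Infinite R] {s : Finset ι} {t : Finset κ} {a : ι → R} {k : ι → ℕ} {b : κ → R}
    {l : κ → ℕ} (h : ∀ z : R, ∑ i ∈ s, a i * z ^ k i = ∑ j ∈ t, b j * z ^ l j) (n : ℕ) :
    ∑ i ∈ s, (if k i = n then a i else 0) = ∑ j ∈ t, if l j = n then b j else 0 := by
  have hP : ∑ i ∈ s, C (a i) * X ^ k i = ∑ j ∈ t, C (b j) * X ^ l j :=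
    funext fun z => by simpa [eval_finsetSum] using h z
  simpa [finsetSum_coeff, coeff_C_mul_X_pow, eq_comm] using congrArg (coeff · n) hP

theorem Finset.prod_mul_add_one_sub_eq_sum {R ι : Type*} [CommRing R] [Fintype ι] [DecidableEq ι]
    (p : ι → R) (z : R) :
    ∏ i, (z * p i + (1 - p i))
      = ∑ S : Finset ι, (∏ i ∈ S, p i) * (∏ i ∈ Sᶜ, (1 - p i)) * z ^ #S := by
  rw [Fintype.prod_add]
  refine sum_congr rfl fun S _ => ?_
  rw [prod_mul_distrib, prod_const]
  ring

theorem Finset.pow_card_inter_eq_sum_powerset {R ι : Type*} [CommRing R] [DecidableEq ι] (z : R)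
    (T A : Finset ι) :
    z ^ #(T ∩ A) = ∑ S ∈ A.powerset, if S ⊆ T then (z - 1) ^ #S else 0 := by
  have hfilter : {S ∈ A.powerset | S ⊆ T} = (T ∩ A).powerset := by
    ext S
    simp only [mem_filter, mem_powerset, subset_inter_iff, and_comm]
  rw [← sum_filter, hfilter]
  simpa using (sum_pow_mul_eq_add_pow (z - 1) 1 (T ∩ A)).symm

theorem Finset.sum_powerset_eq_sum_map_subtype {M ι : Type*} [AddCommMonoid M] (A : Finset ι)
    (F : Finset ι → M) :
    ∑ S ∈ A.powerset, F S = ∑ s : Finset A, F (s.map (Function.Embedding.subtype _)) := by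
  classical
  have hmap (s : Finset A) : s.map (Function.Embedding.subtype _) ⊆ A :=
    fun _ hx => property_of_mem_map_subtype s hx
  refine sum_nbij' (·.subtype (· ∈ A)) (·.map (Function.Embedding.subtype _)) ?_ ?_ ?_ ?_ ?_
  · simp
  · exact fun s _ => mem_powerset.mpr (hmap s)
  · exact fun S hS => subtype_map_of_mem (mem_powerset.mp hS)
  · exact fun s _ => map_injective _ (subtype_map_of_mem (hmap s))
  · exact fun S hS => by rw [subtype_map_of_mem (mem_powerset.mp hS)]

theorem detSub_map {ι κ : Type*} [DecidableEq ι] [DecidableEq κ] (K : Matrix ι ι ℝ) (f : κ ↪ ι)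
    (s : Finset κ) :
    detSub K (s.map f) = (K.submatrix (fun i : s => f i) (fun j : s => f j)).det := by
  rw [detSub, ← Matrix.det_submatrix_equiv_self (s.equivMap f)]
  rfl

theorem sum_powerset_pow_mul_detSub {ι : Type*} [DecidableEq ι] (K : Matrix ι ι ℝ)
    (A : Finset ι) (c : ℝ) :
    ∑ S ∈ A.powerset, c ^ #S * detSub K S = (1 + c • K.submatrix ((↑) : A → ι) (↑)).det := by
  rw [Matrix.det_one_add_eq_sum_det_submatrix, sum_powerset_eq_sum_map_subtype]
  refine sum_congr rfl fun s _ => ?_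
  rw [card_map, detSub_map, ← Fintype.card_coe s, ← Matrix.det_smul]
  rfl

theorem IsDeterminantal.sum_mul_pow_card_inter {μ : Finset α → ℝ} {K : Matrix α α ℝ}
    (hdet : IsDeterminantal μ K) (A : Finset α) (z : ℝ) :
    ∑ T, μ T * z ^ #(T ∩ A) = ∑ S ∈ A.powerset, (z - 1) ^ #S * detSub K S := by
  calc ∑ T, μ T * z ^ #(T ∩ A)
      = ∑ T, ∑ S ∈ A.powerset, (z - 1) ^ #S * (if S ⊆ T then μ T else 0) := by
        refine sum_congr rfl fun T _ => ?_
        rw [pow_card_inter_eq_sum_powerset, mul_sum]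
        refine sum_congr rfl fun S _ => ?_
        split_ifs <;> ring
    _ = ∑ S ∈ A.powerset, (z - 1) ^ #S * detSub K S := by
        rw [sum_comm]
        exact sum_congr rfl fun S _ => by rw [← mul_sum, hdet S]

open Matrix in
theorem count_is_sum_of_bernoullis_general
    (μ : Finset α → ℝ) (K : Matrix α α ℝ)
    (hsymm : K.IsSymm)
    (heig : ∀ (t : ℝ) (x : α → ℝ), x ≠ 0 → K.mulVec x = t • x → 0 ≤ t ∧ t ≤ 1)
    (hdet : IsDeterminantal μ K)
    (A : Finset α) :
    ∃ lam : Fin A.card → ℝ,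
      -- the eigenvalues (with multiplicity) of `K_A`, all lying in `[0,1]`
      (∀ i, 0 ≤ lam i ∧ lam i ≤ 1) ∧
      (Matrix.charpoly (K.submatrix (fun i : {x : α // x ∈ A} => (i : α))
          (fun j : {x : α // x ∈ A} => (j : α)))
        = ∏ i : Fin A.card, (Polynomial.X - Polynomial.C (lam i))) ∧
      -- generating function
      (∀ z : ℝ, (∑ T : Finset α, μ T * z ^ (T ∩ A).card)
        = ∏ i : Fin A.card, (z * lam i + (1 - lam i))) ∧
      -- Bernoulli-sum distribution
      (∀ n : ℕ, (∑ T : Finset α, if (T ∩ A).card = n then μ T else 0)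
        = ∑ S ∈ Finset.univ.filter (fun S : Finset (Fin A.card) => S.card = n),
            (∏ i ∈ S, lam i) * ∏ i ∈ Sᶜ, (1 - lam i)) := by
  have hK : K.IsHermitian := isHermitian_iff_isSymm.mpr hsymm
  have hKA : (K.submatrix ((↑) : A → α) (↑)).IsHermitian := hK.submatrix _
  let e := A.equivFin.symm
  let lam : Fin #A → ℝ := fun i => hKA.eigenvalues (e i)
  have hgen (z : ℝ) : ∑ T, μ T * z ^ #(T ∩ A) = ∏ i, (z * lam i + (1 - lam i)) := by
    rw [hdet.sum_mul_pow_card_inter, sum_powerset_pow_mul_detSub, hKA.det_one_add_smul,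
      ← e.prod_comp]
    exact prod_congr rfl fun i _ => by simp only [RCLike.ofReal_real_eq_id, id, lam]; ring
  refine ⟨lam, fun i => hKA.eigenvalues_mem
    (hK.eigen_mem_Icc_submatrix heig Subtype.val_injective) (e i), ?_, hgen, fun n => ?_⟩
  · rw [hKA.charpoly_eq, ← e.prod_comp]
    rfl
  · rw [sum_filter]
    exact Polynomial.sum_ite_eq_of_forall_sum_mul_pow_eq
      (fun z => by rw [hgen, prod_mul_add_one_sub_eq_sum]) n

/-- The number of points of a symmetric determinantal process in a
set `A` is a sum of independent Bernoullis, with parameters the eigenvalues of `K_A`. -/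
theorem count_is_sum_of_bernoullis
    (μ : Finset α → ℝ) (K : Matrix α α ℝ)
    (hsymm : K.IsSymm)
    (heig : ∀ (t : ℝ) (x : α → ℝ), x ≠ 0 → K.mulVec x = t • x → 0 ≤ t ∧ t ≤ 1)
    (hprob : IsProbMeasure μ) (hdet : IsDeterminantal μ K)
    (A : Finset α) :
    ∃ lam : Fin A.card → ℝ,
      -- the eigenvalues (with multiplicity) of `K_A`, all lying in `[0,1]`
      (∀ i, 0 ≤ lam i ∧ lam i ≤ 1) ∧
      (Matrix.charpoly (K.submatrix (fun i : {x : α // x ∈ A} => (i : α))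
          (fun j : {x : α // x ∈ A} => (j : α)))
        = ∏ i : Fin A.card, (Polynomial.X - Polynomial.C (lam i))) ∧
      -- generating function
      (∀ z : ℝ, (∑ T : Finset α, μ T * z ^ (T ∩ A).card)
        = ∏ i : Fin A.card, (z * lam i + (1 - lam i))) ∧
      -- Bernoulli-sum distribution
      (∀ n : ℕ, (∑ T : Finset α, if (T ∩ A).card = n then μ T else 0)
        = ∑ S ∈ Finset.univ.filter (fun S : Finset (Fin A.card) => S.card = n),
            (∏ i ∈ S, lam i) * ∏ i ∈ Sᶜ, (1 - lam i)) :=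
  count_is_sum_of_bernoullis_general μ K hsymm heig hdet A
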